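/- arXiv:2305.03121 — 6 statements merged into one kernel-verified Lean document; each statement's English description precedes it below -/
import Mathlib

section
/- Let E and F be Riesz spaces with F Dedekind σ-complete and T : E → F a monotone sublinear operator. Then for each x ∈ E⁺ there exists a monotone sublinear operator S : E → F such that (i) 0 ≤ S(y) ≤ T(y⁺) for all y ∈ E, (ii) S(x) = T(x), and (iii) S(y) = 0 whenever |y| ∧ |x| = 0 (y disjoint from x). -/
section Helpers

variable {M : Type*} [Lattice M] [AddCommGroup M]
  [CovariantClass M M (· + ·) (· ≤ ·)]

lemma aux_add_le_add_right' {a b : M} (h : a ≤ b) (c : M) : a + c ≤ b + c := by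
  simpa [add_comm] using add_le_add_left h c

lemma aux_add_inf (a b c : M) : (a ⊓ b) + c = (a + c) ⊓ (b + c) := by
  apply le_antisymm
  · exact le_inf (aux_add_le_add_right' inf_le_left c) (aux_add_le_add_right' inf_le_right c)
  · have h : (a + c) ⊓ (b + c) + (-c) ≤ a ⊓ b :=
      le_inf (by simpa using aux_add_le_add_right' (inf_le_left : (a+c)⊓(b+c) ≤ a + c) (-c))
        (by simpa using aux_add_le_add_right' (inf_le_right : (a+c)⊓(b+c) ≤ b + c) (-c))
    have := aux_add_le_add_right' h c
    simpa [add_assoc] using this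

lemma aux_inf_add_le (a b c : M) (ha : 0 ≤ a) (hb : 0 ≤ b) (hc : 0 ≤ c) :
    (a + b) ⊓ c ≤ a ⊓ c + b ⊓ c := by
  have e1 : a + (b ⊓ c) = (a + b) ⊓ (a + c) := by
    rw [add_comm a, aux_add_inf b c a, add_comm b a, add_comm c a]
  have e2 : c + (b ⊓ c) = (c + b) ⊓ (c + c) := by
    rw [add_comm c, aux_add_inf b c c, add_comm b c]
  have key : a ⊓ c + b ⊓ c = ((a + b) ⊓ (a + c)) ⊓ ((c + b) ⊓ (c + c)) := by
    rw [aux_add_inf a c (b ⊓ c), e1, e2]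
  rw [key]
  have hac : (a + b) ⊓ c ≤ a + c :=
    le_trans inf_le_right (by simpa using aux_add_le_add_right' ha c)
  have hcb : (a + b) ⊓ c ≤ c + b :=
    le_trans inf_le_right (by simpa using add_le_add_left hb c)
  have hcc : (a + b) ⊓ c ≤ c + c :=
    le_trans inf_le_right (by simpa using add_le_add_left hc c)
  exact le_inf (le_inf inf_le_left hac) (le_inf hcb hcc)

variable [Module ℝ M] [PosSMulMono ℝ M]

lemma aux_smul_le_smul {c : ℝ} (hc : 0 ≤ c) {a b : M} (h : a ≤ b) : c • a ≤ c • b :=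
  smul_le_smul_of_nonneg_left h hc

lemma aux_smul_inf {c : ℝ} (hc : 0 < c) (a b : M) : c • (a ⊓ b) = (c • a) ⊓ (c • b) := by
  apply le_antisymm
  · exact le_inf (aux_smul_le_smul hc.le inf_le_left) (aux_smul_le_smul hc.le inf_le_right)
  · have h1 : c⁻¹ • ((c • a) ⊓ (c • b)) ≤ a := by
      have := aux_smul_le_smul (inv_nonneg.2 hc.le) (inf_le_left : (c • a) ⊓ (c • b) ≤ c • a)
      rwa [smul_smul, inv_mul_cancel₀ hc.ne', one_smul] at this
    have h2 : c⁻¹ • ((c • a) ⊓ (c • b)) ≤ b := by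
      have := aux_smul_le_smul (inv_nonneg.2 hc.le) (inf_le_right : (c • a) ⊓ (c • b) ≤ c • b)
      rwa [smul_smul, inv_mul_cancel₀ hc.ne', one_smul] at this
    have := aux_smul_le_smul hc.le (le_inf h1 h2)
    rwa [smul_smul, mul_inv_cancel₀ hc.ne', one_smul] at this

lemma aux_smul_sup {c : ℝ} (hc : 0 < c) (a b : M) : c • (a ⊔ b) = (c • a) ⊔ (c • b) := by
  apply le_antisymm
  · have h1 : a ≤ c⁻¹ • ((c • a) ⊔ (c • b)) := by
      have := aux_smul_le_smul (inv_nonneg.2 hc.le) (le_sup_left : c • a ≤ (c • a) ⊔ (c • b))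
      rwa [smul_smul, inv_mul_cancel₀ hc.ne', one_smul] at this
    have h2 : b ≤ c⁻¹ • ((c • a) ⊔ (c • b)) := by
      have := aux_smul_le_smul (inv_nonneg.2 hc.le) (le_sup_right : c • b ≤ (c • a) ⊔ (c • b))
      rwa [smul_smul, inv_mul_cancel₀ hc.ne', one_smul] at this
    have := aux_smul_le_smul hc.le (sup_le h1 h2)
    rwa [smul_smul, mul_inv_cancel₀ hc.ne', one_smul] at this
  · exact sup_le (aux_smul_le_smul hc.le le_sup_left) (aux_smul_le_smul hc.le le_sup_right)

lemma aux_smul_mono_scalar {a b : ℝ} (h : a ≤ b) {v : M} (hv : 0 ≤ v) : a • v ≤ b • v := by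
  have h0 : 0 ≤ (b - a) • v := by
    have := aux_smul_le_smul (sub_nonneg.2 h) hv
    simpa using this
  rw [sub_smul] at h0
  exact sub_nonneg.1 h0

end Helpers

/-- for each `x ∈ E⁺` there is a monotone sublinear `S : E → F` with
`0 ≤ S y ≤ T (y⁺)`, `S x = T x`, and `S y = 0` whenever `y ⊥ x`. -/
theorem stmt_4 {E F : Type*}
    [Lattice E] [AddCommGroup E] [Module ℝ E]
    [CovariantClass E E (· + ·) (· ≤ ·)] [PosSMulMono ℝ E]
    [Lattice F] [AddCommGroup F] [Module ℝ F]
    [CovariantClass F F (· + ·) (· ≤ ·)] [PosSMulMono ℝ F]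
    (hσ : ∀ f : ℕ → F, BddAbove (Set.range f) → ∃ s : F, IsLUB (Set.range f) s)
    (T : E → F)
    (hTmono : ∀ x y : E, x ≤ y → T x ≤ T y)
    (hTsub : ∀ x y : E, T (x + y) ≤ T x + T y)
    (hThom : ∀ (l : ℝ) (x : E), 0 ≤ l → T (l • x) = l • T x)
    (x : E) (hx : 0 ≤ x) :
    ∃ S : E → F,
      (∀ y z : E, y ≤ z → S y ≤ S z) ∧
      (∀ y z : E, S (y + z) ≤ S y + S z) ∧
      (∀ (l : ℝ) (y : E), 0 ≤ l → S (l • y) = l • S y) ∧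
      (∀ y : E, 0 ≤ S y ∧ S y ≤ T (y ⊔ 0)) ∧
      S x = T x ∧
      (∀ y : E, |y| ⊓ |x| = 0 → S y = 0) := by
  classical
  have hT0 : T 0 = 0 := by
    have := hThom 0 0 le_rfl
    simpa using this
  -- the approximating sequence
  set g : E → ℕ → F := fun y n => T ((y ⊔ 0) ⊓ (n : ℝ) • x) with hg
  have hg0 : ∀ y : E, g y 0 = 0 := by
    intro y
    have : (y ⊔ 0) ⊓ ((0 : ℕ) : ℝ) • x = 0 := by
      simp [inf_eq_right.2 (le_sup_right : (0:E) ≤ y ⊔ 0)]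
    simp [hg, this, hT0]
  have hxnn : ∀ n : ℕ, (0 : E) ≤ (n : ℝ) • x := fun n => by
    simpa using aux_smul_le_smul (c := (n : ℝ)) (Nat.cast_nonneg n) hx
  have hgmono : ∀ y : E, ∀ n : ℕ, g y n ≤ T (y ⊔ 0) := by
    intro y n
    exact hTmono _ _ inf_le_left
  have hbdd : ∀ y : E, BddAbove (Set.range (g y)) := by
    intro y
    exact ⟨T (y ⊔ 0), by rintro _ ⟨n, rfl⟩; exact hgmono y n⟩
  choose S hS using fun y => hσ (g y) (hbdd y)
  have hmem : ∀ y n, g y n ≤ S y := fun y n => (hS y).1 ⟨n, rfl⟩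
  have hub : ∀ y (u : F), (∀ n, g y n ≤ u) → S y ≤ u := by
    intro y u hu
    exact (hS y).2 (by rintro _ ⟨n, rfl⟩; exact hu n)
  -- monotone
  have hSmono : ∀ y z : E, y ≤ z → S y ≤ S z := by
    intro y z hyz
    refine hub y (S z) fun n => ?_
    exact le_trans (hTmono _ _ (inf_le_inf_right _ (sup_le_sup_right hyz 0))) (hmem z n)
  -- nonneg and bound
  have hSnn : ∀ y : E, 0 ≤ S y := fun y => (hg0 y) ▸ hmem y 0
  have hSle : ∀ y : E, S y ≤ T (y ⊔ 0) := fun y => hub y _ (hgmono y)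
  -- subadditive
  have hSsub : ∀ y z : E, S (y + z) ≤ S y + S z := by
    intro y z
    refine hub (y + z) _ fun n => ?_
    have h1 : (y + z) ⊔ 0 ≤ (y ⊔ 0) + (z ⊔ 0) :=
      sup_le (add_le_add le_sup_left le_sup_left)
        (by simpa using add_le_add (le_sup_right : (0:E) ≤ y ⊔ 0) (le_sup_right : (0:E) ≤ z ⊔ 0))
    have h2 : ((y + z) ⊔ 0) ⊓ (n : ℝ) • x ≤ (y ⊔ 0) ⊓ (n : ℝ) • x + (z ⊔ 0) ⊓ (n : ℝ) • x :=
      le_trans (inf_le_inf_right _ h1)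
        (aux_inf_add_le _ _ _ le_sup_right le_sup_right (hxnn n))
    calc g (y + z) n ≤ T ((y ⊔ 0) ⊓ (n : ℝ) • x + (z ⊔ 0) ⊓ (n : ℝ) • x) := hTmono _ _ h2
      _ ≤ g y n + g z n := hTsub _ _
      _ ≤ S y + S z := add_le_add (hmem y n) (hmem z n)
  -- S 0 = 0
  have hS0 : S 0 = 0 := by
    apply le_antisymm
    · refine hub 0 0 fun n => ?_
      have : (0:E) ⊓ (n : ℝ) • x = 0 := inf_eq_left.2 (hxnn n)
      simp [hg, this, hT0]
    · exact hSnn 0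
  -- homogeneity
  have hShom : ∀ (l : ℝ) (y : E), 0 ≤ l → S (l • y) = l • S y := by
    intro l y hl
    rcases eq_or_lt_of_le hl with rfl | hl
    · simp [hS0]
    · -- show l • S y is the LUB of g (l • y)
      have hsup : (l • y) ⊔ 0 = l • (y ⊔ 0) := by
        rw [aux_smul_sup hl, smul_zero]
      have hlub : IsLUB (Set.range (g (l • y))) (l • S y) := by
        constructor
        · rintro _ ⟨n, rfl⟩
          obtain ⟨m, hm⟩ := exists_nat_ge ((n : ℝ) / l)
          have hnm : (n : ℝ) ≤ l * m := by
            rw [div_le_iff₀ hl] at hm; linarith [hm]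
          have harg : ((l • y) ⊔ 0) ⊓ (n : ℝ) • x ≤ l • ((y ⊔ 0) ⊓ (m : ℝ) • x) := by
            rw [hsup, aux_smul_inf hl]
            refine inf_le_inf_left _ ?_
            rw [smul_smul]
            exact aux_smul_mono_scalar hnm hx
          calc g (l • y) n ≤ T (l • ((y ⊔ 0) ⊓ (m : ℝ) • x)) := hTmono _ _ harg
            _ = l • g y m := hThom _ _ hl.le
            _ ≤ l • S y := aux_smul_le_smul hl.le (hmem y m)
        · intro u hu
          have hu' : ∀ n, g (l • y) n ≤ u := fun n => hu ⟨n, rfl⟩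
          have key : ∀ n : ℕ, l • g y n ≤ u := by
            intro n
            obtain ⟨m, hm⟩ := exists_nat_ge (l * n)
            have harg : l • ((y ⊔ 0) ⊓ (n : ℝ) • x) ≤ ((l • y) ⊔ 0) ⊓ (m : ℝ) • x := by
              rw [hsup, aux_smul_inf hl]
              refine inf_le_inf_left _ ?_
              rw [smul_smul]
              exact aux_smul_mono_scalar hm hx
            calc l • g y n = T (l • ((y ⊔ 0) ⊓ (n : ℝ) • x)) := (hThom _ _ hl.le).symm
              _ ≤ g (l • y) m := hTmono _ _ harg
              _ ≤ u := hu' m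
          have : S y ≤ l⁻¹ • u := by
            refine hub y _ fun n => ?_
            have := aux_smul_le_smul (inv_nonneg.2 hl.le) (key n)
            rwa [smul_smul, inv_mul_cancel₀ hl.ne', one_smul] at this
          have := aux_smul_le_smul hl.le this
          rwa [smul_smul, mul_inv_cancel₀ hl.ne', one_smul] at this
      exact (hS (l • y)).unique hlub
  -- S x = T x
  have hSx : S x = T x := by
    apply le_antisymm
    · refine hub x _ fun n => ?_
      exact le_trans (hTmono _ _ inf_le_left) (le_of_eq (by rw [sup_eq_left.2 hx]))
    · have : g x 1 = T x := by
        have : (x ⊔ 0) ⊓ ((1 : ℕ) : ℝ) • x = x := by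
          rw [sup_eq_left.2 hx]; simp
        simp [hg, this]
      exact this ▸ hmem x 1
  -- disjointness
  have hdisj : ∀ y : E, |y| ⊓ |x| = 0 → S y = 0 := by
    intro y hy
    rw [abs_of_nonneg hx] at hy
    apply le_antisymm
    · refine hub y 0 fun n => ?_
      have hzero : (y ⊔ 0) ⊓ (n : ℝ) • x = 0 := by
        apply le_antisymm
        · have h1 : y ⊔ 0 ≤ ((n : ℝ) + 1) • |y| := by
            refine le_trans (sup_le (le_abs_self y) (abs_nonneg y)) ?_
            have := aux_smul_mono_scalar (by push_cast; linarith [Nat.cast_nonneg (α := ℝ) n] :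
              (1:ℝ) ≤ (n : ℝ) + 1) (abs_nonneg y)
            simpa using this
          have h2 : (n : ℝ) • x ≤ ((n : ℝ) + 1) • x :=
            aux_smul_mono_scalar (by linarith) hx
          have := inf_le_inf (α := E) h1 h2
          calc (y ⊔ 0) ⊓ (n : ℝ) • x ≤ (((n : ℝ) + 1) • |y|) ⊓ (((n : ℝ) + 1) • x) := this
            _ = ((n : ℝ) + 1) • (|y| ⊓ x) := (aux_smul_inf (by positivity) _ _).symm
            _ = 0 := by rw [hy, smul_zero]
        · exact le_inf le_sup_right (hxnn n)
      simp [hg, hzero, hT0]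
    · exact hSnn y
  exact ⟨S, hSmono, hSsub, hShom, fun y => ⟨hSnn y, hSle y⟩, hSx, hdisj⟩
end

section
/- Hahn–Banach theorem for sublinear operators: Let X be a real vector space, Y ⊆ X a vector subspace, F a Dedekind complete Riesz space, S : Y → F subadditive and positively homogeneous, and p : X → F subadditive and positively homogeneous with S(u) ≤ p(u) for all u ∈ Y. Then there exists T : X → F that is subadditive and positively homogeneous, extends S (T(y) = S(y) for y ∈ Y), and satisfies T(x) ≤ p(x) for all x ∈ X. -/
/-!
The extension is the infimal convolution `T x = ⨅ y ∈ Y, S y + p (x - y)`. The infimum exists by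
Dedekind completeness, since `S y + p (x - y) ≥ S 0 - p (-x)`. Subadditivity and positive
homogeneity of `S` and `p` pass to `T`; taking `y = 0` gives `T ≤ p`, taking `y = u` gives
`T u ≤ S u` on `Y`, and `S u ≤ S y + S (u - y) ≤ S y + p (u - y)` gives the reverse.
-/

open Set

section Ring

variable {𝕜 X F : Type*} [AddCommGroup X] [ConditionallyCompleteLattice F] [AddCommGroup F]
  [Ring 𝕜] [Module 𝕜 X] {Y : Submodule 𝕜 X} {S : Y → F} {p : X → F}

noncomputable def infConv (S : Y → F) (p : X → F) (x : X) : F :=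
  ⨅ y : Y, S y + p (x - y)

lemma infConv_le (hbdd : ∀ x, BddBelow (range fun y : Y => S y + p (x - y))) (x : X) (y : Y) :
    infConv S p x ≤ S y + p (x - y) :=
  ciInf_le (hbdd x) y

lemma infConv_le_right (hbdd : ∀ x, BddBelow (range fun y : Y => S y + p (x - y)))
    (hS0 : S 0 = 0) (x : X) : infConv S p x ≤ p x := by
  simpa [hS0] using infConv_le hbdd x 0

variable [AddLeftMono F]

lemma bddBelow_range_add_sub (hS : ∀ u v : Y, S (u + v) ≤ S u + S v)
    (hp : ∀ x y : X, p (x + y) ≤ p x + p y) (hSp : ∀ u : Y, S u ≤ p u) (x : X) :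
    BddBelow (range fun y : Y => S y + p (x - y)) := by
  refine ⟨S 0 - p (-x), ?_⟩
  rintro _ ⟨y, rfl⟩
  have hpy : p (-y) ≤ p (-x) + p (x - y) := by
    convert hp (-x) (x - y) using 2
    abel
  calc S 0 - p (-x) ≤ S y + S (-y) - p (-x) := sub_le_sub_right (by simpa using hS y (-y)) _
    _ ≤ S y + p (-y) - p (-x) := by
        gcongr
        simpa using hSp (-y)
    _ ≤ S y + p (x - y) := by
        rw [sub_le_iff_le_add, add_assoc]
        gcongr
        exact hpy.trans_eq (add_comm _ _)

lemma infConv_coe (hbdd : ∀ x, BddBelow (range fun y : Y => S y + p (x - y)))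
    (hS : ∀ u v : Y, S (u + v) ≤ S u + S v) (hSp : ∀ u : Y, S u ≤ p u) (hp0 : p 0 = 0) (u : Y) :
    infConv S p u = S u := by
  refine le_antisymm (by simpa [hp0] using infConv_le hbdd u u) (le_ciInf fun y => ?_)
  calc S u = S (y + (u - y)) := by rw [add_sub_cancel]
    _ ≤ S y + S (u - y) := hS _ _
    _ ≤ S y + p (u - y) := by
        gcongr
        exact hSp (u - y)

lemma infConv_add_le (hbdd : ∀ x, BddBelow (range fun y : Y => S y + p (x - y)))
    (hS : ∀ u v : Y, S (u + v) ≤ S u + S v) (hp : ∀ x y : X, p (x + y) ≤ p x + p y)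
    (x₁ x₂ : X) : infConv S p (x₁ + x₂) ≤ infConv S p x₁ + infConv S p x₂ := by
  refine le_ciInf_add_ciInf fun y₁ y₂ => (infConv_le hbdd _ (y₁ + y₂)).trans ?_
  calc S (y₁ + y₂) + p (x₁ + x₂ - ↑(y₁ + y₂))
      = S (y₁ + y₂) + p ((x₁ - y₁) + (x₂ - y₂)) := by push_cast; abel_nf
    _ ≤ S y₁ + S y₂ + (p (x₁ - y₁) + p (x₂ - y₂)) := add_le_add (hS _ _) (hp _ _)
    _ = S y₁ + p (x₁ - y₁) + (S y₂ + p (x₂ - y₂)) := add_add_add_comm _ _ _ _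

end Ring

section Field

variable {𝕜 X F : Type*} [AddCommGroup X] [ConditionallyCompleteLattice F] [AddCommGroup F]
  [Field 𝕜] [LinearOrder 𝕜] [IsStrictOrderedRing 𝕜] [Module 𝕜 X] [Module 𝕜 F]
  [PosSMulMono 𝕜 F] {Y : Submodule 𝕜 X} {S : Y → F} {p : X → F}

lemma infConv_smul_of_pos (hbdd : ∀ x, BddBelow (range fun y : Y => S y + p (x - y)))
    (hS : ∀ (c : 𝕜) (u : Y), 0 < c → S (c • u) = c • S u)
    (hp : ∀ (c : 𝕜) (x : X), 0 < c → p (c • x) = c • p x) {c : 𝕜} (hc : 0 < c) (x : X) :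
    infConv S p (c • x) = c • infConv S p x := by
  have hmap := (OrderIso.smulRight (β := F) hc).map_ciInf (hbdd x)
  simp only [OrderIso.smulRight_apply] at hmap
  unfold infConv
  rw [hmap, ← (Equiv.smulRight (β := Y) hc.ne').iInf_comp]
  congr 1 with y
  rw [Equiv.smulRight_apply, hS c y hc, Submodule.coe_smul, ← smul_sub, hp c _ hc, smul_add]

end Field

/-- Hahn–Banach theorem for sublinear operators with values in a
Dedekind complete Riesz space `F`. -/
theorem stmt_5 {X F : Type*}
    [AddCommGroup X] [Module ℝ X]
    [ConditionallyCompleteLattice F] [AddCommGroup F] [Module ℝ F]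
    [CovariantClass F F (· + ·) (· ≤ ·)] [PosSMulMono ℝ F]
    (Y : Submodule ℝ X)
    (S : Y → F)
    (hSsub : ∀ u v : Y, S (u + v) ≤ S u + S v)
    (hShom : ∀ (l : ℝ) (u : Y), 0 ≤ l → S (l • u) = l • S u)
    (p : X → F)
    (hpsub : ∀ x y : X, p (x + y) ≤ p x + p y)
    (hphom : ∀ (l : ℝ) (x : X), 0 ≤ l → p (l • x) = l • p x)
    (hdom : ∀ u : Y, S u ≤ p (u : X)) :
    ∃ T : X → F,
      (∀ x y : X, T (x + y) ≤ T x + T y) ∧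
      (∀ (l : ℝ) (x : X), 0 ≤ l → T (l • x) = l • T x) ∧
      (∀ y : Y, T (y : X) = S y) ∧
      (∀ x : X, T x ≤ p x) := by
  have hS0 : S 0 = 0 := by simpa using hShom 0 0 le_rfl
  have hp0 : p 0 = 0 := by simpa using hphom 0 0 le_rfl
  have hbdd := bddBelow_range_add_sub hSsub hpsub hdom
  have hext := infConv_coe hbdd hSsub hdom hp0
  refine ⟨infConv S p, infConv_add_le hbdd hSsub hpsub, fun l x hl => ?_, hext,
    infConv_le_right hbdd hS0⟩
  rcases hl.eq_or_lt with rfl | hl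
  · rw [zero_smul, zero_smul, ← Y.coe_zero, hext, hS0]
  · exact infConv_smul_of_pos hbdd (fun c u hc => hShom c u hc.le)
      (fun c x hc => hphom c x hc.le) hl x
end

section
/- Let E and F be Riesz spaces with F Dedekind complete, G a Riesz subspace of E, and T : G → F monotone sublinear. If there exists a monotone sublinear map p : E → F with T(x) ≤ p(x) for all x ∈ G, then T extends to a positive sublinear operator R : E → F (i.e., R is subadditive, positively homogeneous, R = T on G, and R(x) ≥ 0 for x ∈ E⁺). -/
/-!
Put `q x = p x⁺`. It is again sublinear, and it dominates `T` on `G` because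
`T a ≤ T a⁺ ≤ p a⁺`. Instead of a Zorn-type Hahn–Banach argument, take the
inf-convolution `R x = ⨅ a ∈ G, T a + q (x - a)`: since `T ≤ q` on `G` and both are
sublinear, every term is at least `-q (-x)`, so Dedekind completeness of `F` makes the infimum exist.
`R` is sublinear, restricts to `T` on `G`, and for `x ≥ 0` it is at least
`-q (-x) = -p 0 = 0`.
-/

open Set

structure IsSublinear (𝕜 : Type*) {M F : Type*} [Zero 𝕜] [LE 𝕜] [Add M] [SMul 𝕜 M] [Add F]
    [SMul 𝕜 F] [LE F] (f : M → F) : Prop where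
  map_add_le (x y : M) : f (x + y) ≤ f x + f y
  map_smul_of_nonneg {c : 𝕜} (hc : 0 ≤ c) (x : M) : f (c • x) = c • f x

section

variable {𝕜 M E F : Type*} [Field 𝕜] [LinearOrder 𝕜] [AddCommGroup M] [Module 𝕜 M]
  [AddCommGroup F] [Module 𝕜 F]

namespace IsSublinear

variable [PartialOrder F] {f : M → F}

theorem map_zero (hf : IsSublinear 𝕜 f) : f 0 = 0 := by
  simpa using hf.map_smul_of_nonneg le_rfl (0 : M)

theorem neg_map_neg_le [IsOrderedAddMonoid F] (hf : IsSublinear 𝕜 f) (x : M) : -f (-x) ≤ f x := by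
  have := hf.map_add_le x (-x)
  rw [add_neg_cancel, hf.map_zero] at this
  exact neg_le_iff_add_nonneg.mpr this

end IsSublinear

section SublinearExtension

variable [ConditionallyCompleteLattice F] [IsOrderedAddMonoid F]
  (G : Submodule 𝕜 M) (T : G → F) (q : M → F)

noncomputable def sublinearExtension (x : M) : F :=
  ⨅ a : G, T a + q (x - a)

variable {G T q} (hT : IsSublinear 𝕜 T) (hq : IsSublinear 𝕜 q) (hTq : ∀ a : G, T a ≤ q a)
include hT hq hTq

theorem neg_map_neg_le_add_map_sub (x : M) (a : G) : -q (-x) ≤ T a + q (x - a) := by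
  have hsub := hq.map_add_le (x - a) (-x)
  rw [show x - a + -x = -a by abel] at hsub
  have hT_ge : -q (-a) ≤ T a := by
    simpa using (neg_le_neg (hTq (-a))).trans (hT.neg_map_neg_le a)
  calc -q (-x) ≤ -q (-a) + q (x - a) := by
        rwa [le_neg_add_iff_add_le, ← sub_eq_add_neg, sub_le_iff_le_add]
    _ ≤ T a + q (x - a) := add_le_add_left hT_ge _

theorem bddBelow_range_add_map_sub (x : M) : BddBelow (range fun a : G => T a + q (x - a)) :=
  ⟨-q (-x), by rintro _ ⟨a, rfl⟩; exact neg_map_neg_le_add_map_sub hT hq hTq x a⟩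

theorem sublinearExtension_le (x : M) (a : G) : sublinearExtension G T q x ≤ T a + q (x - a) :=
  ciInf_le (bddBelow_range_add_map_sub hT hq hTq x) a

theorem neg_map_neg_le_sublinearExtension (x : M) : -q (-x) ≤ sublinearExtension G T q x :=
  le_ciInf (neg_map_neg_le_add_map_sub hT hq hTq x)

theorem sublinearExtension_coe (a : G) : sublinearExtension G T q a = T a := by
  refine le_antisymm (by simpa [hq.map_zero] using sublinearExtension_le hT hq hTq a a)
    (le_ciInf fun b => ?_)
  calc T a = T (b + (a - b)) := by rw [add_sub_cancel]
    _ ≤ T b + T (a - b) := hT.map_add_le b (a - b)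
    _ ≤ T b + q (a - b) := add_le_add_right (hTq (a - b)) _

theorem isSublinear_sublinearExtension [IsStrictOrderedRing 𝕜] [PosSMulMono 𝕜 F] :
    IsSublinear 𝕜 (sublinearExtension G T q) where
  map_add_le x y := le_ciInf_add_ciInf fun a b =>
    calc sublinearExtension G T q (x + y) ≤ T (a + b) + q (x + y - (a + b)) :=
          sublinearExtension_le hT hq hTq _ _
      _ ≤ (T a + T b) + (q (x - a) + q (y - b)) := by
          refine add_le_add (hT.map_add_le a b) ?_
          rw [add_sub_add_comm]
          exact hq.map_add_le _ _
      _ = T a + q (x - a) + (T b + q (y - b)) := add_add_add_comm _ _ _ _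
  map_smul_of_nonneg {c} hc x := by
    rcases hc.eq_or_lt with rfl | hc
    · simpa [hT.map_zero] using sublinearExtension_coe hT hq hTq 0
    · have hterm (b : G) : T (c • b) + q (c • x - (c • b : G)) = c • (T b + q (x - b)) := by
        rw [Submodule.coe_smul, ← smul_sub, hT.map_smul_of_nonneg hc.le,
          hq.map_smul_of_nonneg hc.le, smul_add]
      calc sublinearExtension G T q (c • x)
          = ⨅ b : G, T (c • b) + q (c • x - (c • b : G)) :=
            ((Equiv.smulRight hc.ne').iInf_comp (g := fun a : G => T a + q (c • x - a))).symm
        _ = ⨅ b : G, c • (T b + q (x - b)) := by simp only [hterm]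
        _ = c • sublinearExtension G T q x :=
            ((OrderIso.smulRight hc).map_ciInf (bddBelow_range_add_map_sub hT hq hTq x)).symm

end SublinearExtension

section PosPart

variable [Lattice E] [AddCommGroup E]

theorem posPart_add_le [IsOrderedAddMonoid E] (a b : E) : (a + b)⁺ ≤ a⁺ + b⁺ :=
  sup_le (add_le_add (le_posPart a) (le_posPart b))
    (add_nonneg (posPart_nonneg a) (posPart_nonneg b))

theorem posPart_smul_of_nonneg [IsStrictOrderedRing 𝕜] [Module 𝕜 E] [PosSMulMono 𝕜 E] {c : 𝕜}
    (hc : 0 ≤ c) (a : E) : (c • a)⁺ = c • a⁺ := by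
  rcases hc.eq_or_lt with rfl | hc
  · simp
  · have := (OrderIso.smulRight (β := E) hc).map_sup a 0
    simp only [OrderIso.smulRight_apply, smul_zero] at this
    rw [posPart_def, posPart_def, this]

theorem IsSublinear.comp_posPart [IsOrderedAddMonoid E] [IsStrictOrderedRing 𝕜] [Module 𝕜 E]
    [PosSMulMono 𝕜 E] [PartialOrder F] [IsOrderedAddMonoid F] {p : E → F}
    (hp : IsSublinear 𝕜 p) (hp_mono : Monotone p) : IsSublinear 𝕜 fun x => p x⁺ where
  map_add_le x y := (hp_mono (posPart_add_le x y)).trans (hp.map_add_le _ _)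
  map_smul_of_nonneg hc x := by simp only [posPart_smul_of_nonneg hc, hp.map_smul_of_nonneg hc]

end PosPart

end

/-- if a monotone sublinear `T` on a Riesz subspace `G` is dominated
on `G` by a monotone sublinear `p : E → F`, then `T` extends to a positive
sublinear operator `R : E → F`. -/
theorem stmt_10 {E F : Type*}
    [Lattice E] [AddCommGroup E] [Module ℝ E]
    [CovariantClass E E (· + ·) (· ≤ ·)] [PosSMulMono ℝ E]
    [ConditionallyCompleteLattice F] [AddCommGroup F] [Module ℝ F]
    [CovariantClass F F (· + ·) (· ≤ ·)] [PosSMulMono ℝ F]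
    (G : Submodule ℝ E) (hG : ∀ a b : E, a ∈ G → b ∈ G → a ⊔ b ∈ G)
    (T : G → F)
    (hTmono : ∀ a b : G, (a : E) ≤ (b : E) → T a ≤ T b)
    (hTsub : ∀ a b : G, T (a + b) ≤ T a + T b)
    (hThom : ∀ (l : ℝ) (a : G), 0 ≤ l → T (l • a) = l • T a)
    (p : E → F)
    (hpmono : ∀ x y : E, x ≤ y → p x ≤ p y)
    (hpsub : ∀ x y : E, p (x + y) ≤ p x + p y)
    (hphom : ∀ (l : ℝ) (x : E), 0 ≤ l → p (l • x) = l • p x)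
    (hdom : ∀ a : G, T a ≤ p (a : E)) :
    ∃ R : E → F,
      (∀ x y : E, R (x + y) ≤ R x + R y) ∧
      (∀ (l : ℝ) (x : E), 0 ≤ l → R (l • x) = l • R x) ∧
      (∀ a : G, R (a : E) = T a) ∧
      (∀ x : E, 0 ≤ x → 0 ≤ R x) := by
  have : IsOrderedAddMonoid E := { add_le_add_left := fun _ _ h c => add_le_add_left h c }
  have : IsOrderedAddMonoid F := { add_le_add_left := fun _ _ h c => add_le_add_left h c }
  have hT : IsSublinear ℝ T := ⟨hTsub, fun hc a => hThom _ a hc⟩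
  have hp : IsSublinear ℝ p := ⟨hpsub, fun hc x => hphom _ x hc⟩
  have hq := hp.comp_posPart fun x y => hpmono x y
  have hTq (a : G) : T a ≤ p (a : E)⁺ :=
    (hTmono a ⟨_, hG _ _ a.2 G.zero_mem⟩ (le_posPart _)).trans (hdom _)
  have hR := isSublinear_sublinearExtension hT hq hTq
  refine ⟨sublinearExtension G T fun x => p x⁺, hR.map_add_le,
    fun l x hl => hR.map_smul_of_nonneg hl x, sublinearExtension_coe hT hq hTq, fun x hx => ?_⟩
  simpa [posPart_eq_zero.mpr (neg_nonpos.mpr hx), hp.map_zero] using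
    neg_map_neg_le_sublinearExtension hT hq hTq x
end

section
/- Let E and F be ordered vector spaces with F a Dedekind complete Riesz space, G a majorizing subspace of E, and T : G → F monotone sublinear. Then the map p(x) = inf{T(y) : y ∈ G, x ≤ y} is subadditive and positively homogeneous on E, and agrees with T on G. -/
/-!
On `G` the least value of `T` over the majorants of `a` is `T a` itself, by monotonicity. Sums
of majorants of `x` and `y` majorize `x + y`, so by subadditivity of `T` the infimum `p (x + y)`
is a lower bound of the sum set, whose infimum is `p x + p y`. For `l > 0`, scaling by `l` is an
order automorphism of `F` carrying the values over the majorants of `x` onto those over the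
majorants of `l • x`, hence `p x` to `p (l • x)`.
-/

open scoped Pointwise

lemma IsGLB.smul_of_pos {α β : Type*} [GroupWithZero α] [Preorder α] [Preorder β]
    [MulAction α β] [PosSMulMono α β] [PosSMulReflectLE α β]
    {s : Set β} {a : β} {c : α} (hc : 0 < c) (hs : IsGLB s a) : IsGLB (c • s) (c • a) := by
  simpa [← Set.image_smul] using (OrderIso.smulRight (β := β) hc).isGLB_image'.2 hs

section MajorantValues

variable {E F : Type*} [AddCommGroup E] [PartialOrder E] [Module ℝ E] {G : Submodule ℝ E}

def majorantValues (T : G → F) (x : E) : Set F :=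
  {v | ∃ y : G, x ≤ (y : E) ∧ v = T y}

lemma isGLB_majorantValues_coe [Preorder F] {T : G → F}
    (hT : ∀ a b : G, (a : E) ≤ (b : E) → T a ≤ T b) (a : G) :
    IsGLB (majorantValues T (a : E)) (T a) :=
  ⟨by rintro _ ⟨y, hay, rfl⟩; exact hT a y hay, fun _ hw ↦ hw ⟨a, le_rfl, rfl⟩⟩

lemma lowerBounds_majorantValues_add_subset [CovariantClass E E (· + ·) (· ≤ ·)]
    [Preorder F] [Add F] {T : G → F} (hT : ∀ a b : G, T (a + b) ≤ T a + T b) (x y : E) :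
    lowerBounds (majorantValues T (x + y)) ⊆
      lowerBounds (majorantValues T x + majorantValues T y) := by
  rintro c hc _ ⟨_, ⟨a, hxa, rfl⟩, _, ⟨b, hyb, rfl⟩, rfl⟩
  exact (hc ⟨a + b, add_le_add hxa hyb, rfl⟩).trans (hT a b)

lemma majorantValues_smul_of_pos [PosSMulMono ℝ E] [Preorder F] [SMul ℝ F] {T : G → F}
    (hT : ∀ (l : ℝ) (a : G), 0 ≤ l → T (l • a) = l • T a) {l : ℝ} (hl : 0 < l) (x : E) :
    majorantValues T (l • x) = l • majorantValues T x := by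
  ext v
  constructor
  · rintro ⟨y, hy, rfl⟩
    refine ⟨T (l⁻¹ • y), ⟨l⁻¹ • y, ?_, rfl⟩, ?_⟩
    · simpa [inv_smul_smul₀ hl.ne'] using smul_le_smul_of_nonneg_left hy (inv_nonneg.2 hl.le)
    · simp only [← hT l _ hl.le, smul_inv_smul₀ hl.ne']
  · rintro ⟨_, ⟨y, hy, rfl⟩, rfl⟩
    exact ⟨l • y, smul_le_smul_of_nonneg_left hy hl.le, (hT l y hl.le).symm⟩

end MajorantValues

theorem stmt_15_general {E F : Type*}
    [AddCommGroup E] [PartialOrder E] [Module ℝ E]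
    [CovariantClass E E (· + ·) (· ≤ ·)] [PosSMulMono ℝ E]
    [ConditionallyCompleteLattice F] [AddCommGroup F] [Module ℝ F]
    [CovariantClass F F (· + ·) (· ≤ ·)] [PosSMulMono ℝ F]
    (G : Submodule ℝ E)
    (T : G → F)
    (hTmono : ∀ a b : G, (a : E) ≤ (b : E) → T a ≤ T b)
    (hTsub : ∀ a b : G, T (a + b) ≤ T a + T b)
    (hThom : ∀ (l : ℝ) (a : G), 0 ≤ l → T (l • a) = l • T a)
    (p : E → F)
    (hp : ∀ x : E, IsGLB {v : F | ∃ y : G, x ≤ (y : E) ∧ v = T y} (p x)) :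
    (∀ x y : E, p (x + y) ≤ p x + p y) ∧
    (∀ (l : ℝ) (x : E), 0 ≤ l → p (l • x) = l • p x) ∧
    (∀ a : G, p (a : E) = T a) := by
  have hagree (a : G) : p (a : E) = T a := (hp a).unique (isGLB_majorantValues_coe hTmono a)
  refine ⟨fun x y ↦ ?_, fun l x hl ↦ ?_, hagree⟩
  · exact ((hp x).add (hp y)).2
      (lowerBounds_majorantValues_add_subset hTsub x y (hp (x + y)).1)
  · rcases hl.eq_or_lt with rfl | hl
    · have hT0 : T 0 = 0 := by simpa using hThom 0 0 le_rfl
      simpa [hT0] using hagree 0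
    · have h : IsGLB (majorantValues T (l • x)) (p (l • x)) := hp (l • x)
      rw [majorantValues_smul_of_pos hThom hl] at h
      exact h.unique ((hp x).smul_of_pos hl)

/-- for `G` majorizing and `T : G → F` monotone sublinear, the map
`p x = inf {T y : y ∈ G, x ≤ y}` is subadditive, positively homogeneous and
agrees with `T` on `G`. -/
theorem stmt_15 {E F : Type*}
    [AddCommGroup E] [PartialOrder E] [Module ℝ E]
    [CovariantClass E E (· + ·) (· ≤ ·)] [PosSMulMono ℝ E]
    [ConditionallyCompleteLattice F] [AddCommGroup F] [Module ℝ F]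
    [CovariantClass F F (· + ·) (· ≤ ·)] [PosSMulMono ℝ F]
    (G : Submodule ℝ E)
    (hGmaj : ∀ x : E, ∃ y : G, x ≤ (y : E))
    (T : G → F)
    (hTmono : ∀ a b : G, (a : E) ≤ (b : E) → T a ≤ T b)
    (hTsub : ∀ a b : G, T (a + b) ≤ T a + T b)
    (hThom : ∀ (l : ℝ) (a : G), 0 ≤ l → T (l • a) = l • T a)
    (p : E → F)
    (hp : ∀ x : E, IsGLB {v : F | ∃ y : G, x ≤ (y : E) ∧ v = T y} (p x)) :
    (∀ x y : E, p (x + y) ≤ p x + p y) ∧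
    (∀ (l : ℝ) (x : E), 0 ≤ l → p (l • x) = l • p x) ∧
    (∀ a : G, p (a : E) = T a) :=
  stmt_15_general G T hTmono hTsub hThom p hp
end

section
/- Kantorovich-type extension: Let E and F be ordered vector spaces with F a Dedekind complete Riesz space. If G is a majorizing vector subspace of E and T : G → F is a monotone sublinear operator, then T has a positive sublinear extension to all of E, i.e., there exists S : E → F subadditive, positively homogeneous, with S = T on G and S(z) ≥ 0 for all z ∈ E⁺. -/
/-- Kantorovich-type extension: a monotone sublinear operator on a
majorizing subspace `G` of an ordered vector space `E`, with values in a
Dedekind complete Riesz space `F`, has a positive sublinear extension to `E`. -/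
theorem stmt_16 {E F : Type*}
    [AddCommGroup E] [PartialOrder E] [Module ℝ E]
    [CovariantClass E E (· + ·) (· ≤ ·)] [PosSMulMono ℝ E]
    [ConditionallyCompleteLattice F] [AddCommGroup F] [Module ℝ F]
    [CovariantClass F F (· + ·) (· ≤ ·)] [PosSMulMono ℝ F]
    (G : Submodule ℝ E)
    (hGmaj : ∀ x : E, ∃ y : G, x ≤ (y : E))
    (T : G → F)
    (hTmono : ∀ a b : G, (a : E) ≤ (b : E) → T a ≤ T b)
    (hTsub : ∀ a b : G, T (a + b) ≤ T a + T b)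
    (hThom : ∀ (l : ℝ) (a : G), 0 ≤ l → T (l • a) = l • T a) :
    ∃ S : E → F,
      (∀ x y : E, S (x + y) ≤ S x + S y) ∧
      (∀ (l : ℝ) (x : E), 0 ≤ l → S (l • x) = l • S x) ∧
      (∀ a : G, S (a : E) = T a) ∧
      (∀ z : E, 0 ≤ z → 0 ≤ S z) := by
  classical
  have hT0 : T 0 = 0 := by
    have h := hThom 0 0 le_rfl
    simpa using h
  set s : E → Set F := fun x => (fun y : G => T y) '' {y : G | x ≤ (y : E)} with hs
  have hne : ∀ x, (s x).Nonempty := by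
    intro x
    obtain ⟨y, hy⟩ := hGmaj x
    exact ⟨T y, ⟨y, hy, rfl⟩⟩
  have hbdd : ∀ x, BddBelow (s x) := by
    intro x
    obtain ⟨y0, hy0⟩ := hGmaj (-x)
    refine ⟨-T y0, ?_⟩
    rintro v ⟨y, hy, rfl⟩
    have h1 : (0 : E) ≤ (y : E) + (y0 : E) := by
      have h := add_le_add hy hy0
      simpa using h
    have h2 : (0 : F) ≤ T (y + y0) := by
      have h := hTmono 0 (y + y0) (by simpa using h1)
      simpa [hT0] using h
    have h3 : (0 : F) ≤ T y + T y0 := h2.trans (hTsub y y0)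
    have h4 := add_le_add_right h3 (-T y0)
    simpa [add_assoc] using h4
  have hext : ∀ a : G, sInf (s (a : E)) = T a := by
    intro a
    refine le_antisymm (csInf_le (hbdd _) ⟨a, le_rfl, rfl⟩) (le_csInf (hne _) ?_)
    rintro v ⟨y, hy, rfl⟩
    exact hTmono a y hy
  refine ⟨fun x => sInf (s x), ?_, ?_, hext, ?_⟩
  · -- subadditivity
    intro x1 x2
    have key : ∀ v1 ∈ s x1, ∀ v2 ∈ s x2, sInf (s (x1 + x2)) ≤ v1 + v2 := by
      rintro _ ⟨y1, hy1, rfl⟩ _ ⟨y2, hy2, rfl⟩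
      have hmem : T (y1 + y2) ∈ s (x1 + x2) := by
        refine ⟨y1 + y2, ?_, rfl⟩
        have := add_le_add hy1 hy2
        simpa using this
      exact (csInf_le (hbdd _) hmem).trans (hTsub y1 y2)
    have h1 : ∀ v2 ∈ s x2, sInf (s (x1 + x2)) - v2 ≤ sInf (s x1) := by
      intro v2 hv2
      refine le_csInf (hne x1) fun v1 hv1 => ?_
      exact sub_le_iff_le_add.2 (key v1 hv1 v2 hv2)
    have h2 : sInf (s (x1 + x2)) - sInf (s x1) ≤ sInf (s x2) := by
      refine le_csInf (hne x2) fun v2 hv2 => ?_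
      exact sub_le_comm.1 (h1 v2 hv2)
    show sInf (s (x1 + x2)) ≤ sInf (s x1) + sInf (s x2)
    rw [add_comm (sInf (s x1))]
    exact sub_le_iff_le_add.1 h2
  · -- positive homogeneity
    intro l x hl
    show sInf (s (l • x)) = l • sInf (s x)
    rcases eq_or_lt_of_le hl with rfl | hl
    · have h0 : sInf (s ((0:ℝ) • x)) = 0 := by
        have h := hext 0
        simpa [hT0] using h
      simpa using h0
    · have hinv : ∀ a b : F, a ≤ l • b → l⁻¹ • a ≤ b := by
        intro a b h
        have h' := smul_le_smul_of_nonneg_left h (inv_nonneg.2 hl.le)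
        simpa [smul_smul, inv_mul_cancel₀ hl.ne'] using h'
      refine le_antisymm ?_ ?_
      · -- sInf (s (l•x)) ≤ l • sInf (s x)
        have key : ∀ v ∈ s x, sInf (s (l • x)) ≤ l • v := by
          rintro _ ⟨y, hy, rfl⟩
          have hmem : l • T y ∈ s (l • x) := by
            refine ⟨l • y, ?_, hThom l y hl.le⟩
            have h' := smul_le_smul_of_nonneg_left hy hl.le
            simpa using h'
          exact csInf_le (hbdd _) hmem
        have h1 : l⁻¹ • sInf (s (l • x)) ≤ sInf (s x) :=
          le_csInf (hne x) fun v hv => hinv _ _ (key v hv)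
        have h2 := smul_le_smul_of_nonneg_left h1 hl.le
        simpa [smul_smul, mul_inv_cancel₀ hl.ne'] using h2
      · -- l • sInf (s x) ≤ sInf (s (l•x))
        refine le_csInf (hne _) ?_
        rintro _ ⟨y, hy, rfl⟩
        have hx : x ≤ ((l⁻¹ • y : G) : E) := by
          have h' := smul_le_smul_of_nonneg_left hy (inv_nonneg.2 hl.le)
          simpa [smul_smul, inv_mul_cancel₀ hl.ne'] using h'
        have h1 : sInf (s x) ≤ l⁻¹ • T y := by
          have hmem : T (l⁻¹ • y) ∈ s x := ⟨l⁻¹ • y, hx, rfl⟩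
          have := csInf_le (hbdd x) hmem
          rwa [hThom _ _ (inv_nonneg.2 hl.le)] at this
        have h2 := smul_le_smul_of_nonneg_left h1 hl.le
        simpa [smul_smul, mul_inv_cancel₀ hl.ne'] using h2
  · -- positivity
    intro z hz
    refine le_csInf (hne z) ?_
    rintro v ⟨y, hy, rfl⟩
    have h := hTmono 0 y (by simpa using hz.trans hy)
    simpa [hT0] using h
end

section
/- Extreme point criterion: Let E, F be Riesz spaces with F Dedekind complete, G a subspace of E, T : G → F monotone sublinear, and S a monotone sublinear extension of T to E. If inf{S(|x − y|) : y ∈ G} = 0 for every x ∈ E, then S is an extreme point of the convex set ℰ(T) of all monotone sublinear extensions of T. -/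
/-!
If `S = l • Q + (1 - l) • R` with `Q`, `R` monotone sublinear extensions of `T`, then for every
`y ∈ G` the agreement `Q y = T y = R y` and the inequality `P x - P y ≤ P |x - y|` give
`Q x - R x ≤ Q |x - y| + R |x - y| ≤ (l⁻¹ + (1 - l)⁻¹) • S |x - y|`.
Taking the infimum over `y ∈ G` yields `Q x ≤ R x`, and by symmetry `Q = R = S`.
-/

section OrderedGroup

variable {E F : Type*} [Lattice E] [AddCommGroup E]
  [PartialOrder F] [AddCommGroup F] [AddLeftMono F]

theorem sub_le_apply_abs_sub {P : E → F} (hmono : Monotone P)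
    (hsub : ∀ x y, P (x + y) ≤ P x + P y) (x y : E) : P x - P y ≤ P |x - y| := by
  rw [sub_le_iff_le_add']
  calc P x = P (y + (x - y)) := by rw [add_sub_cancel]
    _ ≤ P y + P (x - y) := hsub _ _
    _ ≤ P y + P |x - y| := add_le_add_right (hmono (le_abs_self _)) _

theorem sub_le_apply_abs_sub_add_apply_abs_sub {Q R : E → F}
    (hQmono : Monotone Q) (hQsub : ∀ x y, Q (x + y) ≤ Q x + Q y)
    (hRmono : Monotone R) (hRsub : ∀ x y, R (x + y) ≤ R x + R y)
    {x y : E} (hy : Q y = R y) : Q x - R x ≤ Q |x - y| + R |x - y| := by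
  have hR : R y - R x ≤ R |x - y| := abs_sub_comm x y ▸ sub_le_apply_abs_sub hRmono hRsub y x
  calc Q x - R x = (Q x - Q y) + (R y - R x) := by rw [hy]; abel
    _ ≤ Q |x - y| + R |x - y| := add_le_add (sub_le_apply_abs_sub hQmono hQsub x y) hR

end OrderedGroup

section OrderedModule

variable {F : Type*} [PartialOrder F] [AddCommGroup F] [Module ℝ F] [PosSMulMono ℝ F]

theorem nonpos_of_forall_le_smul_of_isGLB_zero {s : Set F} (hs : IsGLB s 0) {c : ℝ} (hc : 0 < c)
    {w : F} (hw : ∀ v ∈ s, w ≤ c • v) : w ≤ 0 := by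
  have hlb : c⁻¹ • w ≤ 0 := hs.2 fun v hv => (inv_smul_le_iff_of_pos hc).2 (hw v hv)
  simpa using (inv_smul_le_iff_of_pos hc).1 hlb

variable [AddLeftMono F]

theorem add_le_smul_of_eq_convex_combination {l : ℝ} (hl0 : 0 < l) (hl1 : l < 1) {a b s : F}
    (ha : 0 ≤ a) (hb : 0 ≤ b) (hs : s = l • a + (1 - l) • b) :
    a + b ≤ (l⁻¹ + (1 - l)⁻¹) • s := by
  have hl1' : 0 < 1 - l := sub_pos.2 hl1
  have hla : l • a ≤ s := hs ▸ le_add_of_nonneg_right (smul_nonneg hl1'.le hb)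
  have hlb : (1 - l) • b ≤ s := hs ▸ le_add_of_nonneg_left (smul_nonneg hl0.le ha)
  rw [add_smul]
  exact add_le_add ((le_inv_smul_iff_of_pos hl0).2 hla) ((le_inv_smul_iff_of_pos hl1').2 hlb)

variable {E : Type*} [Lattice E] [AddCommGroup E] [AddLeftMono E]

theorem le_of_forall_isGLB_apply_abs_sub {G : Set E} {Q R S : E → F}
    (hQmono : Monotone Q) (hQsub : ∀ x y, Q (x + y) ≤ Q x + Q y)
    (hRmono : Monotone R) (hRsub : ∀ x y, R (x + y) ≤ R x + R y)
    (hQR : ∀ y ∈ G, Q y = R y) {c : ℝ} (hc : 0 < c)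
    (hbound : ∀ z, 0 ≤ z → Q z + R z ≤ c • S z)
    (hinf : ∀ x, IsGLB {v | ∃ y : G, v = S |x - (y : E)|} 0) (x : E) : Q x ≤ R x := by
  refine sub_nonpos.1 (nonpos_of_forall_le_smul_of_isGLB_zero (hinf x) hc ?_)
  rintro _ ⟨⟨y, hy⟩, rfl⟩
  exact (sub_le_apply_abs_sub_add_apply_abs_sub hQmono hQsub hRmono hRsub (hQR y hy)).trans
    (hbound _ (abs_nonneg _))

end OrderedModule

theorem stmt_19_general {E F : Type*}
    [Lattice E] [AddCommGroup E] [Module ℝ E]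
    [CovariantClass E E (· + ·) (· ≤ ·)]
    [ConditionallyCompleteLattice F] [AddCommGroup F] [Module ℝ F]
    [CovariantClass F F (· + ·) (· ≤ ·)] [PosSMulMono ℝ F]
    (G : Submodule ℝ E)
    (T : G → F)
    (S : E → F)
    (hinf : ∀ x : E, IsGLB {v : F | ∃ y : G, v = S |x - (y : E)|} 0) :
    ∀ Q R : E → F,
      ((∀ x y : E, x ≤ y → Q x ≤ Q y) ∧ (∀ x y : E, Q (x + y) ≤ Q x + Q y) ∧
        (∀ (l : ℝ) (x : E), 0 ≤ l → Q (l • x) = l • Q x) ∧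
        (∀ a : G, Q (a : E) = T a)) →
      ((∀ x y : E, x ≤ y → R x ≤ R y) ∧ (∀ x y : E, R (x + y) ≤ R x + R y) ∧
        (∀ (l : ℝ) (x : E), 0 ≤ l → R (l • x) = l • R x) ∧
        (∀ a : G, R (a : E) = T a)) →
      ∀ l : ℝ, 0 < l → l < 1 →
        (∀ x : E, S x = l • Q x + (1 - l) • R x) →
        (∀ x : E, Q x = S x) ∧ (∀ x : E, R x = S x) := by
  rintro Q R ⟨hQmono, hQsub, hQhom, hQext⟩ ⟨hRmono, hRsub, hRhom, hRext⟩ l hl0 hl1 hconv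
  replace hQmono : Monotone Q := fun x y => hQmono x y
  replace hRmono : Monotone R := fun x y => hRmono x y
  have hQ0 : Q 0 = 0 := by simpa using hQhom 0 0 le_rfl
  have hR0 : R 0 = 0 := by simpa using hRhom 0 0 le_rfl
  have hbound (z : E) (hz : 0 ≤ z) : Q z + R z ≤ (l⁻¹ + (1 - l)⁻¹) • S z :=
    add_le_smul_of_eq_convex_combination hl0 hl1 (hQ0 ▸ hQmono hz) (hR0 ▸ hRmono hz) (hconv z)
  have hc : 0 < l⁻¹ + (1 - l)⁻¹ := by have := sub_pos.2 hl1; positivity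
  have hQR (y : E) (hy : y ∈ (G : Set E)) : Q y = R y :=
    (hQext ⟨y, hy⟩).trans (hRext ⟨y, hy⟩).symm
  have hEq (x : E) : Q x = R x :=
    le_antisymm
      (le_of_forall_isGLB_apply_abs_sub hQmono hQsub hRmono hRsub hQR hc hbound hinf x)
      (le_of_forall_isGLB_apply_abs_sub hRmono hRsub hQmono hQsub (fun y hy => (hQR y hy).symm)
        hc (fun z hz => add_comm (R z) (Q z) ▸ hbound z hz) hinf x)
  have hQS (x : E) : Q x = S x := by rw [hconv, ← hEq x, ← add_smul]; simp
  exact ⟨hQS, fun x => (hEq x).symm.trans (hQS x)⟩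

/-- extreme point criterion: if a monotone sublinear extension `S`
of `T` satisfies `inf {S |x - y| : y ∈ G} = 0` for every `x ∈ E`, then `S` is an
extreme point of the convex set of monotone sublinear extensions of `T`. -/
theorem stmt_19 {E F : Type*}
    [Lattice E] [AddCommGroup E] [Module ℝ E]
    [CovariantClass E E (· + ·) (· ≤ ·)] [PosSMulMono ℝ E]
    [ConditionallyCompleteLattice F] [AddCommGroup F] [Module ℝ F]
    [CovariantClass F F (· + ·) (· ≤ ·)] [PosSMulMono ℝ F]
    (G : Submodule ℝ E)
    (T : G → F)
    (S : E → F)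
    (hSmono : ∀ x y : E, x ≤ y → S x ≤ S y)
    (hSsub : ∀ x y : E, S (x + y) ≤ S x + S y)
    (hShom : ∀ (l : ℝ) (x : E), 0 ≤ l → S (l • x) = l • S x)
    (hSext : ∀ a : G, S (a : E) = T a)
    (hinf : ∀ x : E, IsGLB {v : F | ∃ y : G, v = S |x - (y : E)|} 0) :
    ∀ Q R : E → F,
      ((∀ x y : E, x ≤ y → Q x ≤ Q y) ∧ (∀ x y : E, Q (x + y) ≤ Q x + Q y) ∧
        (∀ (l : ℝ) (x : E), 0 ≤ l → Q (l • x) = l • Q x) ∧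
        (∀ a : G, Q (a : E) = T a)) →
      ((∀ x y : E, x ≤ y → R x ≤ R y) ∧ (∀ x y : E, R (x + y) ≤ R x + R y) ∧
        (∀ (l : ℝ) (x : E), 0 ≤ l → R (l • x) = l • R x) ∧
        (∀ a : G, R (a : E) = T a)) →
      ∀ l : ℝ, 0 < l → l < 1 →
        (∀ x : E, S x = l • Q x + (1 - l) • R x) →
        (∀ x : E, Q x = S x) ∧ (∀ x : E, R x = S x) :=
  stmt_19_general G T S hinf
end
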